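/- arXiv:2207.11074 — 2 statements merged into one kernel-verified Lean document; each statement's English description precedes it below -/
import Mathlib

section
/- (Uniqueness of the even, monotone minimizer: plateau profile.) Let π∘ > 0 and μ̃ : [0,∞) → (0,∞) be continuous, strictly decreasing on [0, π∘], strictly increasing on [π∘, ∞), with μ̃(π) → ∞ as π → ∞; let π* > π∘ satisfy ∫₀^{π*} μ̃ = π*·μ̃(π*); set R(π) = ∫₀^{π} μ̃(s) ds. Let H > 0, 0 < v∞ < π*·H, and set h = v∞/π* ∈ (0,H). Suppose π : [−H,H] → [0,∞) is Lebesgue integrable, even (π(−x) = π(x) for a.e. x), nonincreasing on [0,H], satisfies ∫_{−H}^{H} π(x) dx = 2 v∞ and attains the minimum value ∫_{−H}^{H} R(π(x)) dx = 2 v∞·μ̃(π*). Then π(x) = π* for almost every x with |x| < h and π(x) = 0 for almost every x with h < |x| ≤ H. -/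
/-!
Put `m = μ̃(π*)`. The function `R(p) - m p = ∫₀^p (μ̃ - m)` vanishes at `0` and, by the choice
of `π*`, at `π*`; since `μ̃ - m` is positive, then negative, then positive again (it changes sign
at some `a < π*` and at `π*`), it is strictly positive at every other `p ≥ 0`. Integrating,
`∫ R(π) ≥ m ∫ π = 2 v∞ m`, so a minimizer takes only the values `0` and `π*` almost
everywhere. Being even and monotone on `[0,H]`, it is then `π*` on `(-t,t)` and `0` outside,
and the mass constraint forces `t = v∞/π*`.
-/

open MeasureTheory Set Filter

theorem AntitoneOn.exists_threshold {f : ℝ → ℝ} {a b : ℝ} (hab : a ≤ b)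
    (hf : AntitoneOn f (Icc a b)) (L : ℝ) :
    ∃ t ∈ Icc a b, ∀ x ∈ Icc a b, (x < t → L ≤ f x) ∧ (t < x → f x < L) := by
  set S := insert a {x | x ∈ Icc a b ∧ L ≤ f x}
  have hS_le : ∀ x ∈ S, x ≤ b := by rintro x (rfl | hx); exacts [hab, hx.1.2]
  have hbdd : BddAbove S := ⟨b, hS_le⟩
  refine ⟨sSup S, ⟨le_csSup hbdd (mem_insert a _), csSup_le (insert_nonempty _ _) hS_le⟩,
    fun x hx => ⟨fun hxt => ?_, fun hxt => ?_⟩⟩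
  · obtain ⟨y, hy, hxy⟩ := exists_lt_of_lt_csSup (insert_nonempty _ _) hxt
    rcases hy with rfl | hy
    · exact absurd hxy (not_lt.2 hx.1)
    · exact hy.2.trans (hf hx hy.1 hxy.le)
  · by_contra! hL
    exact hxt.not_ge (le_csSup hbdd (mem_insert_of_mem _ ⟨hx, hL⟩))

theorem ae_eq_indicator_Ioo_of_even_of_antitoneOn {f : ℝ → ℝ} {H c : ℝ} (hH : 0 ≤ H)
    (hc : 0 < c) (heven : ∀ᵐ x ∂(volume.restrict (Icc (-H) H)), f (-x) = f x)
    (hf : AntitoneOn f (Icc 0 H))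
    (hvals : ∀ᵐ x ∂(volume.restrict (Icc (-H) H)), f x = 0 ∨ f x = c) :
    ∃ t ∈ Icc 0 H, f =ᵐ[volume.restrict (Icc (-H) H)] (Ioo (-t) t).indicator fun _ => c := by
  -- any level strictly between the two values `0` and `c` locates the jump
  obtain ⟨t, ht, hthreshold⟩ := hf.exists_threshold hH (c / 2)
  refine ⟨t, ht, ?_⟩
  have hne : ∀ᵐ x ∂(volume.restrict (Icc (-H) H)), |x| ≠ t := by
    refine ae_restrict_of_ae (measure_mono_null (fun x (hx : ¬|x| ≠ t) => ?_)
      (({t, -t} : Set ℝ).toFinite.measure_zero volume))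
    rcases abs_choice x with h | h
    · exact .inl (h ▸ not_not.1 hx)
    · exact .inr (show x = -t by linarith [not_not.1 hx])
  filter_upwards [heven, hvals, hne, ae_restrict_mem measurableSet_Icc] with x hev hval hxt hx
  have habs : |x| ∈ Icc 0 H := ⟨abs_nonneg x, abs_le.2 hx⟩
  have hf_abs : f |x| = f x := by
    rcases abs_choice x with h | h <;> rw [h]
    exact hev
  rcases hxt.lt_or_gt with h | h
  · have hlarge := hf_abs ▸ (hthreshold _ habs).1 h
    rw [indicator_of_mem (show x ∈ Ioo (-t) t from abs_lt.1 h)]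
    exact hval.resolve_left fun h0 => by linarith
  · have hsmall := hf_abs ▸ (hthreshold _ habs).2 h
    rw [indicator_of_notMem fun hm : x ∈ Ioo (-t) t => h.not_gt (abs_lt.2 hm)]
    exact hval.resolve_right fun h0 => by linarith

theorem integral_Icc_indicator_Ioo {H t : ℝ} (ht : t ∈ Icc 0 H) (c : ℝ) :
    ∫ x in Icc (-H) H, (Ioo (-t) t).indicator (fun _ => c) x = 2 * t * c := by
  rw [setIntegral_indicator measurableSet_Ioo, setIntegral_const,
    inter_eq_self_of_subset_right
      (Ioo_subset_Icc_self.trans (Icc_subset_Icc (by linarith [ht.2]) ht.2)),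
    measureReal_def, Real.volume_Ioo, ENNReal.toReal_ofReal (by linarith [ht.1]), smul_eq_mul]
  ring

section ValleyProfile

variable {mu : ℝ → ℝ} {pc ps : ℝ}

theorem lt_apply_zero_of_integral_eq_mul (hpc : 0 < pc) (hc : ContinuousOn mu (Ici 0))
    (hanti : StrictAntiOn mu (Icc 0 pc)) (hmono : StrictMonoOn mu (Ici pc)) (hps : pc < ps)
    (hps_eq : ∫ s in (0:ℝ)..ps, mu s = ps * mu ps) : mu ps < mu 0 := by
  by_contra! hle
  have hlt : ∫ s in (0:ℝ)..ps, mu s < ∫ _ in (0:ℝ)..ps, mu ps := by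
    refine intervalIntegral.integral_lt_integral_of_continuousOn_of_le_of_exists_lt
      (hpc.trans hps) (hc.mono Icc_subset_Ici_self) continuousOn_const (fun x hx => ?_)
      ⟨pc, ⟨hpc.le, hps.le⟩, hmono (mem_Ici.2 le_rfl) hps.le hps⟩
    rcases le_or_gt x pc with h | h
    · exact (hanti ⟨le_rfl, hpc.le⟩ ⟨hx.1.le, h⟩ hx.1).le.trans hle
    · exact hmono.monotoneOn h.le hps.le hx.2
  rw [intervalIntegral.integral_const, smul_eq_mul, sub_zero] at hlt
  linarith

theorem exists_crossing_of_integral_eq_mul (hpc : 0 < pc) (hc : ContinuousOn mu (Ici 0))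
    (hanti : StrictAntiOn mu (Icc 0 pc)) (hmono : StrictMonoOn mu (Ici pc)) (hps : pc < ps)
    (hps_eq : ∫ s in (0:ℝ)..ps, mu s = ps * mu ps) :
    ∃ a ∈ Ioo 0 ps, (∀ x ∈ Ico 0 a, mu ps < mu x) ∧ ∀ x ∈ Ioo a ps, mu x < mu ps := by
  have h0 := lt_apply_zero_of_integral_eq_mul hpc hc hanti hmono hps hps_eq
  obtain ⟨a, ha, ha_eq⟩ : ∃ a ∈ Icc 0 pc, mu a = mu ps :=
    intermediate_value_Icc' hpc.le (hc.mono Icc_subset_Ici_self)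
      ⟨(hmono (mem_Ici.2 le_rfl) hps.le hps).le, h0.le⟩
  have ha0 : 0 < a := ha.1.lt_of_ne (by rintro rfl; exact h0.ne' ha_eq)
  refine ⟨a, ⟨ha0, ha.2.trans_lt hps⟩,
    fun x hx => ha_eq ▸ hanti ⟨hx.1, hx.2.le.trans ha.2⟩ ha hx.2, fun x hx => ?_⟩
  rcases le_or_gt x pc with h | h
  · exact ha_eq ▸ hanti ha ⟨ha.1.trans hx.1.le, h⟩ hx.1
  · exact hmono h.le hps.le hx.2

theorem mul_lt_integral_of_integral_eq_mul (hpc : 0 < pc) (hc : ContinuousOn mu (Ici 0))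
    (hanti : StrictAntiOn mu (Icc 0 pc)) (hmono : StrictMonoOn mu (Ici pc)) (hps : pc < ps)
    (hps_eq : ∫ s in (0:ℝ)..ps, mu s = ps * mu ps) {p : ℝ} (hp : 0 ≤ p) (hp0 : p ≠ 0)
    (hp_ps : p ≠ ps) : mu ps * p < ∫ s in (0:ℝ)..p, mu s := by
  obtain ⟨a, ha, hgt, hlt⟩ := exists_crossing_of_integral_eq_mul hpc hc hanti hmono hps hps_eq
  have hps0 : 0 < ps := hpc.trans hps
  have hint : ∀ u v : ℝ, 0 ≤ u → 0 ≤ v → IntervalIntegrable mu volume u v := fun u v hu hv =>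
    (hc.mono fun x hx => (le_min hu hv).trans hx.1).intervalIntegrable
  have hint_sub : ∀ u v : ℝ, 0 ≤ u → 0 ≤ v →
      IntervalIntegrable (fun s => mu s - mu ps) volume u v := fun u v hu hv =>
    (hint u v hu hv).sub intervalIntegrable_const
  have hfrom_zero : ∀ x, 0 ≤ x →
      ∫ s in (0:ℝ)..x, (mu s - mu ps) = (∫ s in (0:ℝ)..x, mu s) - mu ps * x := fun x hx => by
    rw [intervalIntegral.integral_sub (hint 0 x le_rfl hx) intervalIntegrable_const,
      intervalIntegral.integral_const, smul_eq_mul, sub_zero, mul_comm]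
  have hfrom_ps : ∫ s in ps..p, (mu s - mu ps) = (∫ s in (0:ℝ)..p, mu s) - mu ps * p := by
    rw [← intervalIntegral.integral_interval_sub_left (hint_sub 0 p le_rfl hp)
      (hint_sub 0 ps le_rfl hps0.le), hfrom_zero p hp, hfrom_zero ps hps0.le, hps_eq]
    ring
  rw [← sub_pos]
  rcases lt_trichotomy p ps with h | h | h
  · rcases le_or_gt p a with hpa | hpa
    · rw [← hfrom_zero p hp]
      exact intervalIntegral.intervalIntegral_pos_of_pos_on (hint_sub 0 p le_rfl hp)
        (fun x hx => sub_pos.2 (hgt x ⟨hx.1.le, hx.2.trans_le hpa⟩)) (hp.lt_of_ne' hp0)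
    · rw [← hfrom_ps, intervalIntegral.integral_symm, ← intervalIntegral.integral_neg]
      exact intervalIntegral.intervalIntegral_pos_of_pos_on (hint_sub p ps hp hps0.le).neg
        (fun x hx => neg_pos.2 (sub_neg.2 (hlt x ⟨hpa.trans hx.1, hx.2⟩))) h
  · exact absurd h hp_ps
  · rw [← hfrom_ps]
    exact intervalIntegral.intervalIntegral_pos_of_pos_on (hint_sub ps p hps0.le hp)
      (fun x hx => sub_pos.2 (hmono hps.le (hps.le.trans hx.1.le) hx.1)) h

end ValleyProfile

theorem ae_eq_zero_or_eq_of_integral_comp_eq {α : Type*} [MeasurableSpace α] {μ : Measure α}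
    {f : α → ℝ} {g : ℝ → ℝ} {m c : ℝ} (hg0 : g 0 = 0) (hgc : g c = m * c)
    (hg : ∀ p, 0 ≤ p → p ≠ 0 → p ≠ c → m * p < g p) (hf_nonneg : ∀ᵐ x ∂μ, 0 ≤ f x)
    (hf : Integrable f μ) (hgf : Integrable (fun x => g (f x)) μ)
    (h : ∫ x, g (f x) ∂μ = m * ∫ x, f x ∂μ) :
    ∀ᵐ x ∂μ, f x = 0 ∨ f x = c := by
  have hle : ∀ p, 0 ≤ p → m * p ≤ g p := by
    intro p hp
    by_cases h0 : p = 0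
    · simp [h0, hg0]
    by_cases hc : p = c
    · rw [hc, hgc]
    exact (hg p hp h0 hc).le
  have heq : (fun x => m * f x) =ᵐ[μ] fun x => g (f x) := by
    refine (integral_eq_iff_of_ae_le (hf.const_mul m) hgf ?_).1 (by rw [integral_const_mul, h])
    filter_upwards [hf_nonneg] with x hx using hle _ hx
  filter_upwards [heq, hf_nonneg] with x hx hx0
  by_contra! hne
  exact (hg _ hx0 hne.1 hne.2).ne hx

theorem minimizer_plateau_profile_general
    (pc ps : ℝ) (hpc : 0 < pc) (mu R : ℝ → ℝ)
    (hc : ContinuousOn mu (Set.Ici 0))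
    (hpos : ∀ p, 0 ≤ p → 0 < mu p)
    (hanti : StrictAntiOn mu (Set.Icc 0 pc))
    (hmono : StrictMonoOn mu (Set.Ici pc))
    (hps : pc < ps) (hps_eq : (∫ s in (0:ℝ)..ps, mu s) = ps * mu ps)
    (hR : ∀ p, R p = ∫ s in (0:ℝ)..p, mu s)
    (H vinf : ℝ) (hH : 0 < H) (hv : 0 < vinf)
    (π : ℝ → ℝ)
    (hint : IntegrableOn π (Set.Icc (-H) H))
    (hnn : ∀ x ∈ Set.Icc (-H) H, 0 ≤ π x)
    (heven : ∀ᵐ x ∂(volume.restrict (Set.Icc (-H) H)), π (-x) = π x)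
    (hmonoπ : AntitoneOn π (Set.Icc 0 H))
    (hconstraint : (∫ x in Set.Icc (-H) H, π x) = 2 * vinf)
    (hmin : (∫ x in Set.Icc (-H) H, R (π x)) = 2 * vinf * mu ps) :
    ∀ᵐ x ∂(volume.restrict (Set.Icc (-H) H)),
      (|x| < vinf / ps → π x = ps) ∧ (vinf / ps < |x| → π x = 0) := by
  have hps0 : 0 < ps := hpc.trans hps
  -- otherwise the Bochner integral in `hmin` would be the junk value `0`
  have hR_int : IntegrableOn (fun x => R (π x)) (Icc (-H) H) := by
    by_contra h
    rw [integral_undef h] at hmin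
    nlinarith [hpos ps hps0.le]
  have hvals := ae_eq_zero_or_eq_of_integral_comp_eq (by simp [hR])
    (by rw [hR, hps_eq, mul_comm])
    (fun p hp hp0 hp_ps => hR p ▸ mul_lt_integral_of_integral_eq_mul hpc hc hanti hmono hps
      hps_eq hp hp0 hp_ps)
    ((ae_restrict_iff' measurableSet_Icc).2 (.of_forall hnn)) hint hR_int
    (by rw [hmin, hconstraint]; ring)
  obtain ⟨t, ht, hπ⟩ := ae_eq_indicator_Ioo_of_even_of_antitoneOn hH.le hps0 heven hmonoπ hvals
  have ht_eq : vinf / ps = t := by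
    rw [integral_congr_ae hπ, integral_Icc_indicator_Ioo ht] at hconstraint
    field_simp
    linarith
  filter_upwards [hπ] with x hx
  rw [hx, ht_eq]
  exact ⟨fun h => indicator_of_mem (show x ∈ Ioo (-t) t from abs_lt.1 h) _,
    fun h => indicator_of_notMem (fun hm : x ∈ Ioo (-t) t => h.not_gt (abs_lt.2 hm)) _⟩

/-- uniqueness of the even, monotone minimizer: plateau
profile.  With `R(π) = ∫₀^π μ̃`, `0 < v∞ < π*·H` and `h = v∞/π*`, every
integrable, a.e. even, on `[0,H]` nonincreasing `π : [-H,H] → [0,∞)` with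
`∫ π = 2 v∞` attaining the minimal value `∫ R(π(x)) dx = 2 v∞·μ̃(π*)`
satisfies `π = π*` a.e. on `{|x| < h}` and `π = 0` a.e. on `{h < |x| ≤ H}`. -/
theorem minimizer_plateau_profile
    (pc ps : ℝ) (hpc : 0 < pc) (mu R : ℝ → ℝ)
    (hc : ContinuousOn mu (Set.Ici 0))
    (hpos : ∀ p, 0 ≤ p → 0 < mu p)
    (hanti : StrictAntiOn mu (Set.Icc 0 pc))
    (hmono : StrictMonoOn mu (Set.Ici pc))
    (htop : Tendsto mu atTop atTop)
    (hps : pc < ps) (hps_eq : (∫ s in (0:ℝ)..ps, mu s) = ps * mu ps)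
    (hR : ∀ p, R p = ∫ s in (0:ℝ)..p, mu s)
    (H vinf : ℝ) (hH : 0 < H) (hv : 0 < vinf) (hvs : vinf < ps * H)
    (π : ℝ → ℝ)
    (hint : IntegrableOn π (Set.Icc (-H) H))
    (hnn : ∀ x ∈ Set.Icc (-H) H, 0 ≤ π x)
    (heven : ∀ᵐ x ∂(volume.restrict (Set.Icc (-H) H)), π (-x) = π x)
    (hmonoπ : AntitoneOn π (Set.Icc 0 H))
    (hconstraint : (∫ x in Set.Icc (-H) H, π x) = 2 * vinf)
    (hmin : (∫ x in Set.Icc (-H) H, R (π x)) = 2 * vinf * mu ps) :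
    ∀ᵐ x ∂(volume.restrict (Set.Icc (-H) H)),
      (|x| < vinf / ps → π x = ps) ∧ (vinf / ps < |x| → π x = 0) :=
  minimizer_plateau_profile_general pc ps hpc mu R hc hpos hanti hmono hps hps_eq hR H vinf hH hv π
    hint hnn heven hmonoπ hconstraint hmin
end

section
/- (Nonuniqueness of minimizers without monotonicity.) Let π∘ > 0 and μ̃ : [0,∞) → (0,∞) be continuous, strictly decreasing on [0, π∘], strictly increasing on [π∘, ∞), with μ̃(π) → ∞ as π → ∞; let π* > π∘ satisfy ∫₀^{π*} μ̃ = π*·μ̃(π*); set R(π) = ∫₀^{π} μ̃(s) ds. Let H > 0 and 0 < v∞ < π*·H. Then for every Lebesgue-measurable set P ⊆ [−H,H] of Lebesgue measure 2 v∞/π*, the function π = π*·1_P (equal to π* on P and 0 off P) satisfies the constraint ∫_{−H}^{H} π(x) dx = 2 v∞ and attains the minimal value ∫_{−H}^{H} R(π(x)) dx = 2 v∞·μ̃(π*); that is, ∫_{−H}^{H} R(π̃(x)) dx ≥ 2 v∞·μ̃(π*) for every integrable π̃ : [−H,H] → [0,∞) with ∫ π̃ = 2 v∞. -/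
/-!
Since `∫₀^{π*} μ̃ = π* μ̃(π*)`, the pointwise inequality `R(p) ≥ μ̃(π*) p` holds for every
`p ≥ 0`: beyond `π*` the integrand is at least `μ̃(π*)`; below `π*`, quasiconvexity of `μ̃`
either bounds `μ̃` by `μ̃(π*)` on `[p, π*]`, or bounds it below by `μ̃(p) > μ̃(π*)` on `[0, p]`.
Integrating gives `∫ R(π̃) ≥ μ̃(π*) ∫ π̃ = 2 v∞ μ̃(π*)`, with equality for `π*·1_P` because
`R(0) = 0` and `R(π*) = π* μ̃(π*)`.
-/

open MeasureTheory Set Filter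

theorem quasiconvexOn_Ici_of_antitoneOn_of_monotoneOn {β : Type*} [LinearOrder β] {f : ℝ → β}
    {a c : ℝ} (hanti : AntitoneOn f (Icc a c)) (hmono : MonotoneOn f (Ici c)) :
    QuasiconvexOn ℝ (Ici a) f := by
  refine fun r => convex_iff_ordConnected.mpr ?_
  refine ⟨fun x ⟨hxa, hxr⟩ y ⟨hya, hyr⟩ z ⟨hxz, hzy⟩ => ⟨hxa.trans hxz, ?_⟩⟩
  rcases le_total z c with hzc | hcz
  · exact (hanti ⟨hxa, hxz.trans hzc⟩ ⟨hxa.trans hxz, hzc⟩ hxz).trans hxr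
  · exact (hmono hcz (hcz.trans hzy) hzy).trans hyr

theorem QuasiconvexOn.le_max_of_mem_Icc {β : Type*} [LinearOrder β] {f : ℝ → β} {s : Set ℝ}
    (hf : QuasiconvexOn ℝ s f) {x y z : ℝ} (hx : x ∈ s) (hy : y ∈ s) (hz : z ∈ Icc x y) :
    f z ≤ max (f x) (f y) :=
  ((hf _).ordConnected.out ⟨hx, le_max_left _ _⟩ ⟨hy, le_max_right _ _⟩ hz).2

theorem mul_le_integral_of_forall_le {f : ℝ → ℝ} {a b c : ℝ} (hab : a ≤ b)
    (hf : IntervalIntegrable f volume a b) (hle : ∀ x ∈ Icc a b, c ≤ f x) :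
    (b - a) * c ≤ ∫ x in a..b, f x := by
  simpa using intervalIntegral.integral_mono_on hab intervalIntegrable_const hf hle

theorem integral_le_mul_of_forall_le {f : ℝ → ℝ} {a b c : ℝ} (hab : a ≤ b)
    (hf : IntervalIntegrable f volume a b) (hle : ∀ x ∈ Icc a b, f x ≤ c) :
    ∫ x in a..b, f x ≤ (b - a) * c := by
  simpa using intervalIntegral.integral_mono_on hab hf intervalIntegrable_const hle

theorem mul_le_integral_of_quasiconvexOn {μ : ℝ → ℝ} {p₀ p : ℝ}
    (hint : ∀ x, 0 ≤ x → IntervalIntegrable μ volume 0 x)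
    (hqc : QuasiconvexOn ℝ (Ici 0) μ) (hmono : MonotoneOn μ (Ici p₀))
    (hp₀ : 0 ≤ p₀) (heq : ∫ s in (0:ℝ)..p₀, μ s = p₀ * μ p₀) (hp : 0 ≤ p) :
    μ p₀ * p ≤ ∫ s in (0:ℝ)..p, μ s := by
  have hint' : IntervalIntegrable μ volume p p₀ := (hint p hp).symm.trans (hint p₀ hp₀)
  rcases le_total p₀ p with hp₀p | hpp₀
  · have hsplit := intervalIntegral.integral_add_adjacent_intervals (hint p₀ hp₀) hint'.symm
    have : (p - p₀) * μ p₀ ≤ ∫ s in p₀..p, μ s :=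
      mul_le_integral_of_forall_le hp₀p hint'.symm fun s hs =>
        hmono (mem_Ici.mpr le_rfl) hs.1 hs.1
    linarith
  rcases le_or_gt (μ p) (μ p₀) with hμp | hμp
  · have hsplit := intervalIntegral.integral_add_adjacent_intervals (hint p hp) hint'
    have : ∫ s in p..p₀, μ s ≤ (p₀ - p) * μ p₀ :=
      integral_le_mul_of_forall_le hpp₀ hint' fun s hs =>
        (hqc.le_max_of_mem_Icc hp hp₀ hs).trans (max_le hμp le_rfl)
    linarith
  · -- `μ p ≤ max (μ s) (μ p₀)` for `s ≤ p`, and the second entry is too small.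
    have hμs : ∀ s ∈ Icc 0 p, μ p ≤ μ s := fun s hs =>
      (le_max_iff.mp (hqc.le_max_of_mem_Icc hs.1 hp₀ ⟨hs.2, hpp₀⟩)).resolve_right hμp.not_ge
    have := mul_le_integral_of_forall_le hp (hint p hp) hμs
    linarith [mul_le_mul_of_nonneg_left hμp.le hp]

theorem ofReal_integral_le_lintegral_ofReal {α : Type*} [MeasurableSpace α] {μ : Measure α}
    {f : α → ℝ} (hf : Integrable f μ) :
    ENNReal.ofReal (∫ x, f x ∂μ) ≤ ∫⁻ x, ENNReal.ofReal (f x) ∂μ := by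
  calc ENNReal.ofReal (∫ x, f x ∂μ)
      ≤ ENNReal.ofReal (∫ x, max (f x) 0 ∂μ) :=
        ENNReal.ofReal_le_ofReal (integral_mono hf hf.pos_part fun x => le_max_left _ _)
    _ = ∫⁻ x, ENNReal.ofReal (max (f x) 0) ∂μ :=
        ofReal_integral_eq_lintegral_ofReal hf.pos_part
          (Eventually.of_forall fun x => le_max_right _ _)
    _ = ∫⁻ x, ENNReal.ofReal (f x) ∂μ := by simp [ENNReal.ofReal_max]

theorem setIntegral_indicator_const_of_subset {α : Type*} [MeasurableSpace α] {μ : Measure α}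
    {s t : Set α} (ht : MeasurableSet t) (hts : t ⊆ s) (c : ℝ) :
    ∫ x in s, t.indicator (fun _ => c) x ∂μ = μ.real t * c := by
  rw [setIntegral_indicator ht, inter_eq_self_of_subset_right hts, setIntegral_const, smul_eq_mul]

theorem minimizers_nonunique_general
    (pc ps : ℝ) (hpc : 0 < pc) (mu R : ℝ → ℝ)
    (hc : ContinuousOn mu (Set.Ici 0))
    (hanti : StrictAntiOn mu (Set.Icc 0 pc))
    (hmono : StrictMonoOn mu (Set.Ici pc))
    (hps : pc < ps) (hps_eq : (∫ s in (0:ℝ)..ps, mu s) = ps * mu ps)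
    (hR : ∀ p, R p = ∫ s in (0:ℝ)..p, mu s)
    (H vinf : ℝ) (hv : 0 < vinf)
    (P : Set ℝ) (hPsub : P ⊆ Set.Icc (-H) H) (hPmeas : MeasurableSet P)
    (hPvol : volume P = ENNReal.ofReal (2 * vinf / ps)) :
    (∫ x in Set.Icc (-H) H, P.indicator (fun _ => ps) x) = 2 * vinf ∧
    (∫ x in Set.Icc (-H) H, R (P.indicator (fun _ => ps) x)) = 2 * vinf * mu ps ∧
    (∀ π : ℝ → ℝ, IntegrableOn π (Set.Icc (-H) H) →
      (∀ x ∈ Set.Icc (-H) H, 0 ≤ π x) →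
      (∫ x in Set.Icc (-H) H, π x) = 2 * vinf →
      ENNReal.ofReal (2 * vinf * mu ps)
        ≤ ∫⁻ x in Set.Icc (-H) H, ENNReal.ofReal (R (π x))) := by
  have hps0 : 0 < ps := hpc.trans hps
  have hvolP : volume.real P = 2 * vinf / ps := by
    rw [measureReal_def, hPvol, ENNReal.toReal_ofReal (by positivity)]
  have hkey : ∀ p, 0 ≤ p → mu ps * p ≤ R p := fun p hp => by
    rw [hR]
    exact mul_le_integral_of_quasiconvexOn
      (fun x hx => (hc.mono Icc_subset_Ici_self).intervalIntegrable_of_Icc hx)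
      (quasiconvexOn_Ici_of_antitoneOn_of_monotoneOn hanti.antitoneOn hmono.monotoneOn)
      (hmono.monotoneOn.mono (Ici_subset_Ici.mpr hps.le)) hps0.le hps_eq hp
  have hRind : (fun x => R (P.indicator (fun _ => ps) x)) = P.indicator fun _ => ps * mu ps := by
    funext x
    by_cases hx : x ∈ P <;> simp [hx, hR, hps_eq]
  refine ⟨?_, ?_, fun π hπint hπnonneg hπeq => ?_⟩
  · rw [setIntegral_indicator_const_of_subset hPmeas hPsub, hvolP]
    field_simp
  · rw [hRind, setIntegral_indicator_const_of_subset hPmeas hPsub, hvolP]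
    field_simp
  · calc ENNReal.ofReal (2 * vinf * mu ps)
        = ENNReal.ofReal (∫ x in Icc (-H) H, mu ps * π x) := by
          rw [integral_const_mul, hπeq, mul_comm]
      _ ≤ ∫⁻ x in Icc (-H) H, ENNReal.ofReal (mu ps * π x) :=
          ofReal_integral_le_lintegral_ofReal (hπint.const_mul _)
      _ ≤ ∫⁻ x in Icc (-H) H, ENNReal.ofReal (R (π x)) :=
          lintegral_mono_ae <| ae_restrict_of_forall_mem measurableSet_Icc fun x hx =>
            ENNReal.ofReal_le_ofReal (hkey _ (hπnonneg x hx))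

/-- nonuniqueness of minimizers without monotonicity.
With `R(π) = ∫₀^π μ̃` and `0 < v∞ < π*·H`, for every measurable
`P ⊆ [-H,H]` with measure `2 v∞/π*`, the function `π = π*·1_P` satisfies the
constraint `∫ π = 2 v∞` and attains the minimal value
`∫ R(π(x)) dx = 2 v∞·μ̃(π*)`, i.e. `∫ R(π̃) ≥ 2 v∞·μ̃(π*)` for every
integrable `π̃ : [-H,H] → [0,∞)` with `∫ π̃ = 2 v∞`. -/
theorem minimizers_nonunique
    (pc ps : ℝ) (hpc : 0 < pc) (mu R : ℝ → ℝ)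
    (hc : ContinuousOn mu (Set.Ici 0))
    (hpos : ∀ p, 0 ≤ p → 0 < mu p)
    (hanti : StrictAntiOn mu (Set.Icc 0 pc))
    (hmono : StrictMonoOn mu (Set.Ici pc))
    (htop : Tendsto mu atTop atTop)
    (hps : pc < ps) (hps_eq : (∫ s in (0:ℝ)..ps, mu s) = ps * mu ps)
    (hR : ∀ p, R p = ∫ s in (0:ℝ)..p, mu s)
    (H vinf : ℝ) (hH : 0 < H) (hv : 0 < vinf) (hvs : vinf < ps * H)
    (P : Set ℝ) (hPsub : P ⊆ Set.Icc (-H) H) (hPmeas : MeasurableSet P)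
    (hPvol : volume P = ENNReal.ofReal (2 * vinf / ps)) :
    (∫ x in Set.Icc (-H) H, P.indicator (fun _ => ps) x) = 2 * vinf ∧
    (∫ x in Set.Icc (-H) H, R (P.indicator (fun _ => ps) x)) = 2 * vinf * mu ps ∧
    (∀ π : ℝ → ℝ, IntegrableOn π (Set.Icc (-H) H) →
      (∀ x ∈ Set.Icc (-H) H, 0 ≤ π x) →
      (∫ x in Set.Icc (-H) H, π x) = 2 * vinf →
      ENNReal.ofReal (2 * vinf * mu ps)
        ≤ ∫⁻ x in Set.Icc (-H) H, ENNReal.ofReal (R (π x))) :=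
  minimizers_nonunique_general pc ps hpc mu R hc hanti hmono hps hps_eq hR H vinf hv P hPsub hPmeas
    hPvol
end
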